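/- arXiv:1712.09880 — 3 statements merged into one kernel-verified Lean document; each statement's English description precedes it below -/
import Mathlib

section
/- Let p, d be positive integers and let η = (η_1, …, η_d) : ℝ^p → [0,∞)^d be continuous. Set Λ̃ := {λ ∈ ℝ^p : η_j(λ) > 0 for all j}, and assume Λ̃ is dense in ℝ^p. For λ ∈ ℝ^p and 1 ≤ j ≤ d define g_j(λ) ⊆ [0,∞) × ℤ by: g_j(λ) := {(a,b) : (a + η_j(λ)b)/2 ∈ η_j(λ)·ℕ and (a − η_j(λ)b)/2 ∈ η_j(λ)·ℕ} if η_j(λ) > 0, and g_j(λ) := [0,∞) × ℤ if η_j(λ) = 0; set g(λ) := ∏_{j=1}^d g_j(λ) ⊆ [0,∞)^d × ℤ^d (after reordering coordinates). Then the closure, for the Euclidean distance on ℝ^d × ℤ^d × ℝ^p, of the set g̃ := ⋃_{λ ∈ Λ̃} g(λ) × {λ} is exactly the set ĝ := ⋃_{λ ∈ ℝ^p} g(λ) × {λ}. -/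
/-! Both inclusions are checked one coordinate `j` at a time. For `e = η_j(λ) ≠ 0` the comb
condition says that `(a ± e b)/(2e)` lie in the closed set `ℕ ⊆ ℝ`, a closed condition near any
point with `e ≠ 0`; at `e = 0` only `0 ≤ a` is asked, so `ĝ` is closed. Conversely, a point of `ĝ`
is the limit along `λ' → λ` within the dense set `Λ̃`: where `η_j(λ) > 0` keep the pair `(m, n)` with
`a = η_j(λ)(m + n)`, `b = m - n` and take `η_j(λ')(m + n)`; where `η_j(λ) = 0` the comb
`η_j(λ')(|b| + 2ℕ)` has mesh `2 η_j(λ') → 0`, so it has points within `η_j(λ')(|b| + 2)` of `a`. -/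

open Filter Topology Set

/-- The comb condition defining `g_j(λ)`: if `e = η_j(λ) = 0` it is just `0 ≤ a`,
otherwise it asks `(a ± e b)/2 ∈ e·ℕ`. -/
def combCond (e a : ℝ) (b : ℤ) : Prop :=
  0 ≤ a ∧ (e = 0 ∨
    ((∃ n : ℕ, (a + e * b) / 2 = e * n) ∧ (∃ n : ℕ, (a - e * b) / 2 = e * n)))

lemma combCond_iff_exists_nat {e a : ℝ} {b : ℤ} :
    combCond e a b ↔ 0 ≤ a ∧ (e = 0 ∨ ∃ m n : ℕ, a = e * (m + n) ∧ b = (m : ℤ) - n) := by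
  refine and_congr_right fun _ => ?_
  constructor
  · rintro (he | ⟨⟨m, hm⟩, ⟨n, hn⟩⟩)
    · exact .inl he
    by_cases he : e = 0
    · exact .inl he
    refine .inr ⟨m, n, by linarith, ?_⟩
    have : e * b = e * (m - n) := by linarith
    exact_mod_cast mul_left_cancel₀ he this
  · rintro (he | ⟨m, n, rfl, rfl⟩)
    · exact .inl he
    exact .inr ⟨⟨m, by push_cast; ring⟩, ⟨n, by push_cast; ring⟩⟩

/-- At `e = 0` both quotients are `0` by the convention `x / 0 = 0`, which matches the
degenerate case of `combCond`. -/
lemma combCond_iff_div_mem_range {e a : ℝ} {b : ℤ} :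
    combCond e a b ↔ 0 ≤ a ∧ (a + e * b) / (2 * e) ∈ range ((↑) : ℕ → ℝ) ∧
      (a - e * b) / (2 * e) ∈ range ((↑) : ℕ → ℝ) := by
  refine and_congr_right fun _ => ?_
  by_cases he : e = 0
  · simp [he]
  have hmem : ∀ c : ℝ, (∃ n : ℕ, c / 2 = e * n) ↔ c / (2 * e) ∈ range ((↑) : ℕ → ℝ) := by
    intro c
    refine exists_congr fun n => ?_
    rw [eq_div_iff (mul_ne_zero two_ne_zero he), div_eq_iff two_ne_zero]
    constructor <;> intro h <;> linarith
  simp only [he, false_or, hmem]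

lemma isClosed_setOf_div_mem {X : Type*} [TopologicalSpace X] {c e : X → ℝ} {T : Set ℝ}
    (hc : Continuous c) (he : Continuous e) (hT : IsClosed T) (hT0 : 0 ∈ T) :
    IsClosed {x | c x / e x ∈ T} := by
  refine isClosed_of_closure_subset fun x hx => ?_
  by_cases hex : e x = 0
  · simpa [hex] using hT0
  rw [← hT.closure_eq]
  exact (hc.continuousAt.div he.continuousAt hex).continuousWithinAt.mem_closure hx
    fun _ hy => hy

lemma isClosed_setOf_combCond {X : Type*} [TopologicalSpace X] {e a : X → ℝ} {b : X → ℤ}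
    (he : Continuous e) (ha : Continuous a) (hb : Continuous b) :
    IsClosed {x | combCond (e x) (a x) (b x)} := by
  have hb' : Continuous fun x => (b x : ℝ) := continuous_of_discreteTopology.comp hb
  have h2e : Continuous fun x => 2 * e x := continuous_const.mul he
  have hN : IsClosed (range ((↑) : ℕ → ℝ)) := Nat.isClosedEmbedding_coe_real.isClosed_range
  simp only [combCond_iff_div_mem_range, ofPred_and]
  exact (isClosed_le continuous_const ha).inter
    ((isClosed_setOf_div_mem (ha.add (he.mul hb')) h2e hN ⟨0, Nat.cast_zero⟩).inter
      (isClosed_setOf_div_mem (ha.sub (he.mul hb')) h2e hN ⟨0, Nat.cast_zero⟩))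

lemma exists_combCond_mem_Ico {e : ℝ} (he : 0 < e) {a : ℝ} (ha : 0 ≤ a) (b : ℤ) :
    ∃ a' ∈ Ico a (a + e * (b.natAbs + 2)), combCond e a' b := by
  set k := ⌈a / (2 * e)⌉₊
  have h2e : 0 < 2 * e := by positivity
  have hk₁ : a ≤ 2 * e * k := (div_le_iff₀' h2e).1 (Nat.le_ceil _)
  have hk₂ : 2 * e * (k - 1) < a :=
    (lt_div_iff₀' h2e).1 (sub_lt_iff_lt_add.2 (Nat.ceil_lt_add_one (div_nonneg ha h2e.le)))
  refine ⟨e * (b.natAbs + 2 * k), ⟨?_, ?_⟩, ?_⟩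
  · nlinarith [mul_nonneg he.le (Nat.cast_nonneg (α := ℝ) b.natAbs)]
  · nlinarith
  refine combCond_iff_exists_nat.2 ⟨by positivity, .inr ⟨b.toNat + k, (-b).toNat + k, ?_, ?_⟩⟩
  · rw [← Int.toNat_add_toNat_neg_eq_natAbs]
    push_cast
    ring
  · push_cast
    omega

lemma exists_tendsto_combCond {ι : Type*} {l : Filter ι} {e : ι → ℝ} {e₀ a : ℝ} {b : ℤ}
    (he : Tendsto e l (𝓝 e₀)) (hpos : ∀ᶠ i in l, 0 < e i) (h : combCond e₀ a b) :
    ∃ a' : ι → ℝ, Tendsto a' l (𝓝 a) ∧ ∀ᶠ i in l, combCond (e i) (a' i) b := by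
  obtain ⟨ha, rfl | ⟨m, n, rfl, rfl⟩⟩ := combCond_iff_exists_nat.1 h
  · have : ∀ i, ∃ a', 0 < e i → a' ∈ Ico a (a + e i * (b.natAbs + 2)) ∧ combCond (e i) a' b := by
      intro i
      by_cases hi : 0 < e i
      · obtain ⟨a', h₁, h₂⟩ := exists_combCond_mem_Ico hi ha b
        exact ⟨a', fun _ => ⟨h₁, h₂⟩⟩
      · exact ⟨0, fun h' => (hi h').elim⟩
    choose a' ha' using this
    have hupper : Tendsto (fun i => a + e i * (b.natAbs + 2)) l (𝓝 a) := by
      simpa using tendsto_const_nhds.add (he.mul_const ((b.natAbs : ℝ) + 2))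
    refine ⟨a', tendsto_of_tendsto_of_tendsto_of_le_of_le' tendsto_const_nhds hupper ?_ ?_,
      hpos.mono fun i hi => (ha' i hi).2⟩
    · exact hpos.mono fun i hi => (ha' i hi).1.1
    · exact hpos.mono fun i hi => (ha' i hi).1.2.le
  · refine ⟨fun i => e i * (m + n), he.mul_const _, hpos.mono fun i hi => ?_⟩
    exact combCond_iff_exists_nat.2 ⟨by positivity, .inr ⟨m, n, rfl, rfl⟩⟩

theorem closure_frequency_space_general (p d : ℕ)
    (η : (Fin p → ℝ) → Fin d → ℝ)
    (hcont : Continuous η)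
    (hdense : Dense {lam : Fin p → ℝ | ∀ j, 0 < η lam j}) :
    closure {x : (Fin d → ℝ) × (Fin d → ℤ) × (Fin p → ℝ) |
        (∀ j, 0 < η x.2.2 j) ∧ ∀ j, combCond (η x.2.2 j) (x.1 j) (x.2.1 j)} =
      {x : (Fin d → ℝ) × (Fin d → ℤ) × (Fin p → ℝ) |
        ∀ j, combCond (η x.2.2 j) (x.1 j) (x.2.1 j)} := by
  refine (closure_minimal (fun x hx => hx.2) ?_).antisymm fun x hx => ?_
  · simp only [ofPred_forall]
    exact isClosed_iInter fun j => isClosed_setOf_combCond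
      ((continuous_apply j).comp (hcont.comp (continuous_snd.comp continuous_snd)))
      ((continuous_apply j).comp continuous_fst)
      ((continuous_apply j).comp (continuous_fst.comp continuous_snd))
  set Λ := {lam : Fin p → ℝ | ∀ j, 0 < η lam j}
  have : (𝓝[Λ] x.2.2).NeBot := mem_closure_iff_nhdsWithin_neBot.1 (hdense x.2.2)
  have hη : ∀ j, Tendsto (fun lam => η lam j) (𝓝[Λ] x.2.2) (𝓝 (η x.2.2 j)) := fun j =>
    ((continuous_apply j).comp hcont).continuousAt.tendsto.mono_left nhdsWithin_le_nhds
  choose a' ha' hcomb using fun j =>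
    exists_tendsto_combCond (hη j) (eventually_nhdsWithin_of_forall fun lam hlam => hlam j) (hx j)
  refine mem_closure_of_tendsto (f := fun lam => (fun j => a' j lam, x.2.1, lam))
    ((tendsto_pi_nhds.2 ha').prodMk_nhds (tendsto_const_nhds.prodMk_nhds
      (tendsto_nhdsWithin_of_tendsto_nhds tendsto_id))) ?_
  filter_upwards [self_mem_nhdsWithin, eventually_all.2 hcomb] with lam hpos hcomb
  exact ⟨hpos, hcomb⟩

/-- The closure of `g̃ = ⋃_{λ ∈ Λ̃} g(λ) × {λ}` in `ℝ^d × ℤ^d × ℝ^p`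
is `ĝ = ⋃_{λ ∈ ℝ^p} g(λ) × {λ}`. -/
theorem closure_frequency_space (p d : ℕ) (hp : 0 < p) (hd : 0 < d)
    (η : (Fin p → ℝ) → Fin d → ℝ)
    (hcont : Continuous η)
    (hnn : ∀ lam j, 0 ≤ η lam j)
    (hdense : Dense {lam : Fin p → ℝ | ∀ j, 0 < η lam j}) :
    closure {x : (Fin d → ℝ) × (Fin d → ℤ) × (Fin p → ℝ) |
        (∀ j, 0 < η x.2.2 j) ∧ ∀ j, combCond (η x.2.2 j) (x.1 j) (x.2.1 j)} =
      {x : (Fin d → ℝ) × (Fin d → ℤ) × (Fin p → ℝ) |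
        ∀ j, combCond (η x.2.2 j) (x.1 j) (x.2.1 j)} :=
  closure_frequency_space_general p d η hcont hdense
end

section
/- For every r > 0 and C ≥ 0 there exists a finite constant M (depending only on r and C) such that: for all η > 0 with η ≤ Cr, all n, m ∈ ℕ with η·n ≤ r² and η·m ≤ r², and all x, y ∈ ℝ with |x| ≤ r and |y| ≤ r, the double series ∑_{ℓ₁=0}^∞ ∑_{ℓ₂=0}^∞ η^{(ℓ₁+ℓ₂)/2} |y|^{ℓ₁} |x|^{ℓ₂} / (ℓ₁! ℓ₂!) · (2n + 2ℓ₁)^{ℓ₁/2} (2m + 2ℓ₂)^{ℓ₂/2} converges and its sum is at most M. In particular, for every R ≥ 0 the double series ∑_{ℓ₁,ℓ₂=0}^∞ R^{ℓ₁+ℓ₂} (1+ℓ₁)^{ℓ₁/2} (1+ℓ₂)^{ℓ₂/2} / (ℓ₁! ℓ₂!) converges. -/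
open Real Filter

private noncomputable def fK (K : ℝ) (ℓ : ℕ) : ℝ :=
  K ^ ℓ * (1 + ℓ : ℝ) ^ ((ℓ : ℝ) / 2) / ℓ.factorial

private lemma fK_nonneg {K : ℝ} (hK : 0 ≤ K) (ℓ : ℕ) : 0 ≤ fK K ℓ := by
  unfold fK; positivity

private lemma ratio_step {K : ℝ} (hK : 1 ≤ K) {ℓ : ℕ} (hℓ : 108 * K ^ 2 ≤ ℓ) :
    fK K (ℓ + 1) ≤ (1 / 2) * fK K ℓ := by
  have hK0 : (0:ℝ) < K := lt_of_lt_of_le one_pos hK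
  have h1ℓ : (0:ℝ) < 1 + ℓ := by positivity
  have h2ℓ : (0:ℝ) < 2 + ℓ := by positivity
  have hℓ1 : (1:ℝ) ≤ ℓ := by nlinarith [sq_nonneg K]
  -- (2+ℓ)^(ℓ/2) ≤ 3 * (1+ℓ)^(ℓ/2)
  have hexp : (2 + ℓ : ℝ) ≤ (1 + ℓ) * Real.exp (1 / (1 + ℓ)) := by
    have h := mul_le_mul_of_nonneg_left (Real.add_one_le_exp (1 / (1 + (ℓ:ℝ)))) h1ℓ.le
    have heq : (1 + (ℓ:ℝ)) * (1 / (1 + ℓ) + 1) = 2 + ℓ := by field_simp; ring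
    linarith [h, heq.ge, heq.le]
  have hmain : (2 + ℓ : ℝ) ^ ((ℓ:ℝ) / 2) ≤ 3 * (1 + ℓ : ℝ) ^ ((ℓ:ℝ) / 2) := by
    calc (2 + ℓ : ℝ) ^ ((ℓ:ℝ) / 2)
        ≤ ((1 + ℓ) * Real.exp (1 / (1 + ℓ))) ^ ((ℓ:ℝ) / 2) :=
          Real.rpow_le_rpow h2ℓ.le hexp (by positivity)
      _ = (1 + ℓ : ℝ) ^ ((ℓ:ℝ) / 2) * Real.exp (1 / (1 + ℓ)) ^ ((ℓ:ℝ) / 2) :=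
          Real.mul_rpow h1ℓ.le (Real.exp_pos _).le
      _ ≤ (1 + ℓ : ℝ) ^ ((ℓ:ℝ) / 2) * 3 := by
          gcongr
          rw [← Real.exp_one_rpow (1 / (1 + (ℓ:ℝ))), ← Real.rpow_mul (Real.exp_pos 1).le]
          calc Real.exp 1 ^ (1 / (1 + (ℓ:ℝ)) * ((ℓ:ℝ) / 2))
              ≤ Real.exp 1 ^ (1:ℝ) := by
                apply Real.rpow_le_rpow_of_exponent_le (Real.one_le_exp zero_le_one)
                rw [div_mul_div_comm, one_mul]
                rw [div_le_one (by positivity)]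
                linarith
            _ ≤ 3 := by
                rw [Real.rpow_one]
                linarith [Real.exp_one_lt_d9.le]
      _ = 3 * (1 + ℓ : ℝ) ^ ((ℓ:ℝ) / 2) := mul_comm _ _
  -- sqrt bound : 6*K*(2+ℓ)^(1/2) ≤ ℓ+1
  have hsqrt : 6 * K * (2 + ℓ : ℝ) ^ ((1:ℝ)/2) ≤ ℓ + 1 := by
    rw [← Real.sqrt_eq_rpow]
    have h : Real.sqrt (2 + ℓ) ≤ Real.sqrt (((ℓ+1)/(6*K))^2) := by
      apply Real.sqrt_le_sqrt
      rw [div_pow]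
      rw [le_div_iff₀ (by positivity)]
      nlinarith
    rw [Real.sqrt_sq (by positivity)] at h
    rw [← le_div_iff₀' (by positivity : (0:ℝ) < 6 * K)]
    exact h
  -- now combine
  unfold fK
  rw [Nat.factorial_succ]
  push_cast
  have hfact : (0:ℝ) < ℓ.factorial := by positivity
  have hsplit : ((ℓ:ℝ) + 1) / 2 = (1:ℝ)/2 + (ℓ:ℝ)/2 := by ring
  have hbase : (1 + ((ℓ:ℝ) + 1)) = 2 + (ℓ:ℝ) := by ring
  rw [hbase, hsplit, Real.rpow_add h2ℓ]
  rw [mul_div_assoc', div_le_div_iff₀ (by positivity) (by positivity)]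
  have key : K * ((2 + ℓ : ℝ) ^ ((1:ℝ)/2) * (2 + ℓ : ℝ) ^ ((ℓ:ℝ)/2)) ≤
      (1/2) * ((1 + ℓ : ℝ) ^ ((ℓ:ℝ)/2) * (ℓ + 1)) := by
    calc K * ((2 + ℓ : ℝ) ^ ((1:ℝ)/2) * (2 + ℓ : ℝ) ^ ((ℓ:ℝ)/2))
        ≤ K * ((2 + ℓ : ℝ) ^ ((1:ℝ)/2) * (3 * (1 + ℓ : ℝ) ^ ((ℓ:ℝ)/2))) := by
          gcongr
      _ = (1 + ℓ : ℝ) ^ ((ℓ:ℝ)/2) * (3 * K * (2 + ℓ : ℝ) ^ ((1:ℝ)/2)) := by ring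
      _ ≤ (1 + ℓ : ℝ) ^ ((ℓ:ℝ)/2) * ((ℓ + 1)/2) := by
          gcongr
          linarith
      _ = (1/2) * ((1 + ℓ : ℝ) ^ ((ℓ:ℝ)/2) * (ℓ + 1)) := by ring
  rw [pow_succ]
  nlinarith [mul_le_mul_of_nonneg_left key (show (0:ℝ) ≤ K ^ ℓ * ℓ.factorial by positivity)]

private lemma key_summable {K : ℝ} (hK : 0 ≤ K) : Summable (fK K) := by
  have hmax : (1:ℝ) ≤ max K 1 := le_max_right _ _
  have hmax0 : (0:ℝ) < max K 1 := lt_of_lt_of_le one_pos hmax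
  have base : Summable (fK (max K 1)) := by
    apply summable_of_ratio_norm_eventually_le (r := 1/2) (by norm_num)
    filter_upwards [eventually_ge_atTop (⌈108 * (max K 1) ^ 2⌉₊)] with ℓ hℓ
    have h108 : 108 * (max K 1) ^ 2 ≤ (ℓ:ℝ) := by
      calc 108 * (max K 1) ^ 2 ≤ (⌈108 * (max K 1) ^ 2⌉₊ : ℝ) :=
            Nat.le_ceil _
        _ ≤ ℓ := by exact_mod_cast hℓ
    have h := ratio_step hmax h108
    rw [Real.norm_eq_abs, Real.norm_eq_abs,
      abs_of_nonneg (fK_nonneg hmax0.le _), abs_of_nonneg (fK_nonneg hmax0.le _)]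
    exact h
  apply base.of_nonneg_of_le (fK_nonneg hK)
  intro ℓ
  unfold fK
  gcongr
  exact le_max_left _ _

private lemma g_bound {r C η : ℝ} (hr : 0 < r) (hC : 0 ≤ C) (hη : 0 < η)
    (hηCr : η ≤ C * r) (N : ℕ) (hN : η * N ≤ r ^ 2) {c : ℝ} (hc0 : 0 ≤ c) (hc : c ≤ r)
    (a : ℕ) :
    η ^ ((a:ℝ)/2) * c ^ a * (2*N + 2*a : ℝ) ^ ((a:ℝ)/2) / a.factorial
      ≤ fK (r * Real.sqrt (2*r^2 + 2*C*r)) a := by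
  have hB : (0:ℝ) ≤ 2*r^2 + 2*C*r := by positivity
  have h2N : (0:ℝ) ≤ 2*N + 2*a := by positivity
  have hexp : (0:ℝ) ≤ (a:ℝ)/2 := by positivity
  have step1 : η ^ ((a:ℝ)/2) * (2*N + 2*a : ℝ) ^ ((a:ℝ)/2)
      = (η * (2*N + 2*a)) ^ ((a:ℝ)/2) := (Real.mul_rpow hη.le h2N).symm
  have step2 : η * (2*(N:ℝ) + 2*a) ≤ (2*r^2 + 2*C*r) * (1 + a) := by
    have h1 : η * (a:ℝ) ≤ C * r * a := by
      apply mul_le_mul_of_nonneg_right hηCr (Nat.cast_nonneg a)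
    have ha : (0:ℝ) ≤ a := Nat.cast_nonneg a
    nlinarith [hN, h1, ha, hB, mul_nonneg (mul_nonneg (by norm_num : (0:ℝ) ≤ 2) (mul_nonneg hr.le hr.le)) ha]
  have step3 : ((2*r^2 + 2*C*r) * (1 + a)) ^ ((a:ℝ)/2)
      = Real.sqrt (2*r^2 + 2*C*r) ^ a * (1 + a : ℝ) ^ ((a:ℝ)/2) := by
    rw [Real.mul_rpow hB (by positivity)]
    congr 1
    rw [Real.sqrt_eq_rpow, ← Real.rpow_natCast ((2*r^2+2*C*r) ^ ((1:ℝ)/2)) a,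
      ← Real.rpow_mul hB]
    congr 1
    ring
  unfold fK
  rw [div_le_div_iff₀ (by positivity) (by positivity)]
  have key : η ^ ((a:ℝ)/2) * c ^ a * (2*N + 2*a : ℝ) ^ ((a:ℝ)/2)
      ≤ (r * Real.sqrt (2*r^2 + 2*C*r)) ^ a * (1 + a : ℝ) ^ ((a:ℝ)/2) := by
    calc η ^ ((a:ℝ)/2) * c ^ a * (2*N + 2*a : ℝ) ^ ((a:ℝ)/2)
        = c ^ a * ((η * (2*N + 2*a)) ^ ((a:ℝ)/2)) := by rw [← step1]; ring
      _ ≤ r ^ a * (((2*r^2 + 2*C*r) * (1 + a)) ^ ((a:ℝ)/2)) := by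
          gcongr
      _ = r ^ a * (Real.sqrt (2*r^2 + 2*C*r) ^ a * (1 + a : ℝ) ^ ((a:ℝ)/2)) := by
          rw [step3]
      _ = (r * Real.sqrt (2*r^2 + 2*C*r)) ^ a * (1 + a : ℝ) ^ ((a:ℝ)/2) := by
          rw [mul_pow]; ring
  have hfa : (0:ℝ) < a.factorial := by positivity
  nlinarith [mul_le_mul_of_nonneg_right key hfa.le]

/-- Uniform bound for the double series controlling the kernel `W̃_j` on bounded sets,
together with the auxiliary convergence fact. -/
theorem double_series_uniform_bound :
    (∀ r : ℝ, 0 < r → ∀ C : ℝ, 0 ≤ C → ∃ M : ℝ,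
      ∀ η : ℝ, 0 < η → η ≤ C * r → ∀ n m : ℕ,
        η * n ≤ r ^ 2 → η * m ≤ r ^ 2 → ∀ x y : ℝ, |x| ≤ r → |y| ≤ r →
          Summable (fun ℓ : ℕ × ℕ =>
            η ^ (((ℓ.1 : ℝ) + ℓ.2) / 2) * |y| ^ ℓ.1 * |x| ^ ℓ.2 /
                (ℓ.1.factorial * ℓ.2.factorial) *
              ((2 * n + 2 * ℓ.1 : ℝ) ^ ((ℓ.1 : ℝ) / 2) *
                (2 * m + 2 * ℓ.2 : ℝ) ^ ((ℓ.2 : ℝ) / 2))) ∧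
          (∑' ℓ : ℕ × ℕ,
            η ^ (((ℓ.1 : ℝ) + ℓ.2) / 2) * |y| ^ ℓ.1 * |x| ^ ℓ.2 /
                (ℓ.1.factorial * ℓ.2.factorial) *
              ((2 * n + 2 * ℓ.1 : ℝ) ^ ((ℓ.1 : ℝ) / 2) *
                (2 * m + 2 * ℓ.2 : ℝ) ^ ((ℓ.2 : ℝ) / 2))) ≤ M) ∧
    (∀ R : ℝ, 0 ≤ R → Summable (fun ℓ : ℕ × ℕ =>
      R ^ (ℓ.1 + ℓ.2) * (1 + ℓ.1 : ℝ) ^ ((ℓ.1 : ℝ) / 2) *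
        (1 + ℓ.2 : ℝ) ^ ((ℓ.2 : ℝ) / 2) / (ℓ.1.factorial * ℓ.2.factorial))) := by
  constructor
  · intro r hr C hC
    set K : ℝ := r * Real.sqrt (2*r^2 + 2*C*r) with hKdef
    have hK : 0 ≤ K := by positivity
    refine ⟨(∑' ℓ, fK K ℓ) * (∑' ℓ, fK K ℓ), ?_⟩
    intro η hη hηCr n m hn hm x y hx hy
    set h : ℕ × ℕ → ℝ := fun ℓ =>
      η ^ (((ℓ.1 : ℝ) + ℓ.2) / 2) * |y| ^ ℓ.1 * |x| ^ ℓ.2 /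
          (ℓ.1.factorial * ℓ.2.factorial) *
        ((2 * n + 2 * ℓ.1 : ℝ) ^ ((ℓ.1 : ℝ) / 2) *
          (2 * m + 2 * ℓ.2 : ℝ) ^ ((ℓ.2 : ℝ) / 2)) with hhdef
    have hfac : ∀ ℓ : ℕ × ℕ, h ℓ =
        (η ^ ((ℓ.1:ℝ)/2) * |y| ^ ℓ.1 * (2*n + 2*ℓ.1 : ℝ) ^ ((ℓ.1:ℝ)/2) / ℓ.1.factorial) *
        (η ^ ((ℓ.2:ℝ)/2) * |x| ^ ℓ.2 * (2*m + 2*ℓ.2 : ℝ) ^ ((ℓ.2:ℝ)/2) / ℓ.2.factorial) := by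
      intro ℓ
      rw [hhdef]
      simp only
      rw [show ((ℓ.1:ℝ) + ℓ.2)/2 = (ℓ.1:ℝ)/2 + (ℓ.2:ℝ)/2 by ring, Real.rpow_add hη]
      ring
    have hb1 : ∀ a : ℕ,
        η ^ ((a:ℝ)/2) * |y| ^ a * (2*n + 2*a : ℝ) ^ ((a:ℝ)/2) / a.factorial ≤ fK K a :=
      fun a => g_bound hr hC hη hηCr n hn (abs_nonneg y) hy a
    have hb2 : ∀ a : ℕ,
        η ^ ((a:ℝ)/2) * |x| ^ a * (2*m + 2*a : ℝ) ^ ((a:ℝ)/2) / a.factorial ≤ fK K a :=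
      fun a => g_bound hr hC hη hηCr m hm (abs_nonneg x) hx a
    have hgnonneg : ∀ (c : ℝ) (N a : ℕ), 0 ≤ c →
        0 ≤ η ^ ((a:ℝ)/2) * c ^ a * (2*N + 2*a : ℝ) ^ ((a:ℝ)/2) / a.factorial := by
      intro c N a hc; positivity
    have hle : ∀ ℓ : ℕ × ℕ, h ℓ ≤ fK K ℓ.1 * fK K ℓ.2 := by
      intro ℓ
      rw [hfac ℓ]
      exact mul_le_mul (hb1 ℓ.1) (hb2 ℓ.2) (hgnonneg _ m ℓ.2 (abs_nonneg x)) (fK_nonneg hK _)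
    have hnonneg : ∀ ℓ : ℕ × ℕ, 0 ≤ h ℓ := by
      intro ℓ
      rw [hfac ℓ]
      exact mul_nonneg (hgnonneg _ n ℓ.1 (abs_nonneg y)) (hgnonneg _ m ℓ.2 (abs_nonneg x))
    have hboundsum : Summable (fun ℓ : ℕ × ℕ => fK K ℓ.1 * fK K ℓ.2) :=
      (key_summable hK).mul_of_nonneg (key_summable hK) (fK_nonneg hK) (fK_nonneg hK)
    have hsum : Summable h := hboundsum.of_nonneg_of_le hnonneg hle
    refine ⟨hsum, ?_⟩
    have hnorm : Summable fun i => ‖fK K i‖ := by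
      simpa only [Real.norm_eq_abs, abs_of_nonneg (fK_nonneg hK _)] using key_summable hK
    calc (∑' ℓ, h ℓ) ≤ ∑' ℓ : ℕ × ℕ, fK K ℓ.1 * fK K ℓ.2 := Summable.tsum_le_tsum hle hsum hboundsum
      _ = (∑' ℓ, fK K ℓ) * (∑' ℓ, fK K ℓ) := (tsum_mul_tsum_of_summable_norm hnorm hnorm).symm
  · intro R hR
    have : Summable (fun ℓ : ℕ × ℕ => fK R ℓ.1 * fK R ℓ.2) :=
      (key_summable hR).mul_of_nonneg (key_summable hR) (fK_nonneg hR) (fK_nonneg hR)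
    apply this.congr
    intro ℓ
    unfold fK
    rw [pow_add]
    ring
end

section
/- Let p ≥ 1 be an integer, let η : ℝ^p → [0, ∞) be continuous, and let λ₀ ∈ ℝ^p with η(λ₀) = 0. Let b ∈ ℤ, let θ : [0,∞) × ℝ^p → ℝ be continuous with compact support, and let χ : ℝ^p → ℝ be integrable with compact support and ∫_{ℝ^p} χ(λ) dλ = 1. Define m(λ) := 2η(λ) ∑_{n=0}^∞ θ(η(λ)(2n + |b|), λ) when η(λ) > 0, and m(λ) := ∫_0^∞ θ(a, λ) da when η(λ) = 0. Then ∫_{ℝ^p} ε^{−p} χ((λ − λ₀)/ε) m(λ) dλ → ∫_0^∞ θ(a, λ₀) da as ε → 0⁺. -/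
/-!
Sampling `f` at the node `h (2n + c)` of the cell `[2hn, 2h(n+1))` containing `a` turns the
Riemann sum `2h ∑ f(h(2n + c))` into `∫₀^∞ f(node(h, a)) da`, and with `node(0, a) = a` this
writes `m(λ) = ∫₀^∞ θ(node(η λ, a), λ) da` for every `λ`. Since the nodes converge to `a` as
`h → 0`, dominated convergence in `a` gives `m(λ) → ∫₀^∞ θ(a, λ₀) da` as `λ → λ₀`. As `m` is
also bounded and measurable, substituting `λ = λ₀ + εu` and applying dominated convergence once
more gives `∫ χ(u) m(λ₀ + εu) du → ∫₀^∞ θ(a, λ₀) da`.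
-/

open MeasureTheory Filter Set Topology

/-- For `h > 0`, the node `h (2n + c)` attached to the cell `[2hn, 2h(n+1))` containing `a`. -/
noncomputable def latticeNode (h c a : ℝ) : ℝ :=
  if h = 0 then a else h * (2 * ⌊a / (2 * h)⌋₊ + c)

section LatticeNode

variable {h c a : ℝ}

theorem latticeNode_mem_Icc (hh : 0 ≤ h) (hc : 0 ≤ c) (ha : 0 ≤ a) :
    latticeNode h c a ∈ Icc (a - 2 * h) (a + h * c) := by
  unfold latticeNode
  split_ifs with h0
  · simp [h0]
  · have h2 : 0 < 2 * h := by positivity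
    have hlo := (le_div_iff₀ h2).1 (Nat.floor_le (div_nonneg ha h2.le))
    have hhi := (div_lt_iff₀ h2).1 (Nat.lt_floor_add_one (a / (2 * h)))
    constructor <;> nlinarith

theorem mem_Ico_iff_floor_eq (hh : 0 < h) (n : ℕ) :
    a ∈ Ico (2 * h * n) (2 * h * (n + 1)) ↔ 0 ≤ a ∧ ⌊a / (2 * h)⌋₊ = n := by
  have h2 : 0 < 2 * h := by positivity
  constructor
  · rintro ⟨hlo, hhi⟩
    have ha : 0 ≤ a := le_trans (by positivity) hlo
    refine ⟨ha, (Nat.floor_eq_iff (div_nonneg ha h2.le)).2 ⟨?_, ?_⟩⟩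
    · rw [le_div_iff₀ h2]; linarith
    · rw [div_lt_iff₀ h2]; linarith
  · rintro ⟨ha, hn⟩
    obtain ⟨hlo, hhi⟩ := (Nat.floor_eq_iff (div_nonneg ha h2.le)).1 hn
    rw [le_div_iff₀ h2] at hlo
    rw [div_lt_iff₀ h2] at hhi
    constructor <;> linarith

theorem latticeNode_of_mem_Ico (hh : 0 < h) {n : ℕ} (ha : a ∈ Ico (2 * h * n) (2 * h * (n + 1))) :
    latticeNode h c a = h * (2 * n + c) := by
  rw [latticeNode, if_neg hh.ne', ((mem_Ico_iff_floor_eq hh n).1 ha).2]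

theorem tendsto_latticeNode (hc : 0 ≤ c) (ha : 0 ≤ a) :
    Tendsto (fun h => latticeNode h c a) (𝓝[≥] 0) (𝓝 a) := by
  have hlo : Tendsto (fun h : ℝ => a - 2 * h) (𝓝 0) (𝓝 a) :=
    (by fun_prop : Continuous fun h : ℝ => a - 2 * h).tendsto' 0 a (by simp)
  have hhi : Tendsto (fun h : ℝ => a + h * c) (𝓝 0) (𝓝 a) :=
    (by fun_prop : Continuous fun h : ℝ => a + h * c).tendsto' 0 a (by simp)
  exact tendsto_of_tendsto_of_tendsto_of_le_of_le' (hlo.mono_left nhdsWithin_le_nhds)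
    (hhi.mono_left nhdsWithin_le_nhds)
    (eventually_nhdsWithin_of_forall fun h hh => (latticeNode_mem_Icc hh hc ha).1)
    (eventually_nhdsWithin_of_forall fun h hh => (latticeNode_mem_Icc hh hc ha).2)

end LatticeNode

theorem measurable_latticeNode (c : ℝ) : Measurable fun q : ℝ × ℝ => latticeNode q.1 c q.2 := by
  unfold latticeNode
  refine Measurable.ite (measurableSet_eq_fun measurable_fst measurable_const) measurable_snd ?_
  fun_prop

theorem integral_Ioi_comp_latticeNode {f : ℝ → ℝ} {h c : ℝ} (hh : 0 < h)
    (hf : Summable fun n : ℕ => |f (h * (2 * n + c))|) :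
    ∫ a in Ioi 0, f (latticeNode h c a) = 2 * h * ∑' n : ℕ, f (h * (2 * n + c)) := by
  set cell : ℕ → Set ℝ := fun n => Ico (2 * h * n) (2 * h * (n + 1))
  have hcell : ∀ (g : ℝ → ℝ) n,
      ∫ a in cell n, g (latticeNode h c a) = 2 * h * g (h * (2 * n + c)) := by
    intro g n
    rw [setIntegral_congr_fun measurableSet_Ico fun a ha => by
      rw [latticeNode_of_mem_Ico hh ha], setIntegral_const, measureReal_def, Real.volume_Ico,
      ENNReal.toReal_ofReal (by nlinarith), smul_eq_mul]
    ring
  have hdisj : Pairwise (Function.onFun Disjoint cell) := fun m n hmn =>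
    Set.disjoint_left.2 fun a ham han =>
      hmn (((mem_Ico_iff_floor_eq hh m).1 ham).2.symm.trans ((mem_Ico_iff_floor_eq hh n).1 han).2)
  have hunion : ⋃ n, cell n = Ici 0 := by
    ext a
    simp [cell, mem_Ico_iff_floor_eq hh]
  have hint : IntegrableOn (fun a => f (latticeNode h c a)) (⋃ n, cell n) := by
    refine integrableOn_iUnion_of_summable_integral_norm (fun n => ?_) ?_
    · exact (integrableOn_const (C := f (h * (2 * n + c))) measure_Ico_lt_top.ne).congr_fun
        (fun a ha => by rw [latticeNode_of_mem_Ico hh ha]) measurableSet_Ico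
    · exact (hf.mul_left (2 * h)).congr fun n => by simp only [Real.norm_eq_abs, hcell (|f ·|)]
  rw [← integral_Ici_eq_integral_Ioi, ← hunion,
    integral_iUnion (fun n => measurableSet_Ico) hdisj hint]
  exact (tsum_congr (hcell f)).trans tsum_mul_left

section Sampling

variable {f : ℝ → ℝ} {R C h c : ℝ}

theorem summable_abs_comp_lattice (hf : ∀ t, R < t → f t = 0) (hh : 0 < h) (c : ℝ) :
    Summable fun n : ℕ => |f (h * (2 * n + c))| := by
  have hlat : Tendsto (fun n : ℕ => h * (2 * n + c)) atTop atTop :=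
    ((tendsto_natCast_atTop_atTop.const_mul_atTop two_pos).atTop_add
      tendsto_const_nhds).const_mul_atTop hh
  have hzero : ∀ᶠ n : ℕ in cofinite, |f (h * (2 * n + c))| = 0 := by
    rw [Nat.cofinite_eq_atTop]
    filter_upwards [hlat.eventually_gt_atTop R] with n hn
    rw [hf _ hn, abs_zero]
  exact summable_of_hasFiniteSupport (eventually_cofinite.1 hzero)

theorem abs_comp_latticeNode_le_indicator (hC : ∀ t, |f t| ≤ C) (hf : ∀ t, R < t → f t = 0)
    (hh : 0 ≤ h) (hc : 0 ≤ c) {a : ℝ} (ha : 0 ≤ a) :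
    |f (latticeNode h c a)| ≤ (Icc 0 (R + 2 * h)).indicator (fun _ => C) a := by
  by_cases haR : a ≤ R + 2 * h
  · rw [indicator_of_mem (show a ∈ Icc 0 (R + 2 * h) from ⟨ha, haR⟩)]
    exact hC _
  · rw [indicator_of_notMem fun h' => haR h'.2,
      hf _ (by linarith [(latticeNode_mem_Icc hh hc ha).1]), abs_zero]

theorem integrable_indicator_Icc_const (r C : ℝ) :
    Integrable ((Icc 0 r).indicator fun _ : ℝ => C) :=
  (integrableOn_const (C := C) measure_Icc_lt_top.ne).integrable_indicator measurableSet_Icc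

theorem abs_integral_Ioi_comp_latticeNode_le (hC : ∀ t, |f t| ≤ C) (hf : ∀ t, R < t → f t = 0)
    (hR : 0 ≤ R) (hh : 0 ≤ h) (hc : 0 ≤ c) :
    |∫ a in Ioi 0, f (latticeNode h c a)| ≤ C * (R + 2 * h) := by
  have hC0 : 0 ≤ C := (abs_nonneg _).trans (hC 0)
  calc |∫ a in Ioi 0, f (latticeNode h c a)|
      ≤ ∫ a in Ioi 0, (Icc 0 (R + 2 * h)).indicator (fun _ => C) a :=
        norm_integral_le_of_norm_le (integrable_indicator_Icc_const _ C).integrableOn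
          (ae_restrict_of_forall_mem measurableSet_Ioi fun a ha =>
            (Real.norm_eq_abs _).trans_le
              (abs_comp_latticeNode_le_indicator hC hf hh hc (le_of_lt ha)))
    _ ≤ ∫ a, (Icc 0 (R + 2 * h)).indicator (fun _ => C) a :=
        setIntegral_le_integral (integrable_indicator_Icc_const _ C)
          (ae_of_all _ fun a => indicator_nonneg (fun _ _ => hC0) a)
    _ = C * (R + 2 * h) := by
        rw [integral_indicator_const C measurableSet_Icc,
          Real.volume_real_Icc_of_le (by positivity), smul_eq_mul, sub_zero, mul_comm]

end Sampling

theorem HasCompactSupport.exists_forall_lt_fst_eq_zero {X : Type*} [TopologicalSpace X]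
    {θ : ℝ × X → ℝ} (hθs : HasCompactSupport θ) : ∃ R, 0 ≤ R ∧ ∀ a x, R < a → θ (a, x) = 0 := by
  obtain ⟨R, hR⟩ := (hθs.image continuous_fst).bddAbove
  refine ⟨max R 0, le_max_right _ _, fun a x ha => ?_⟩
  by_contra hne
  have : a ≤ R := hR ⟨(a, x), subset_tsupport θ hne, rfl⟩
  linarith [le_max_left R 0]

/-- The paper's `m(λ)`, written uniformly in `η λ` (see `latticeMean_eq_ite`). -/
noncomputable def latticeMean {X : Type*} (η : X → ℝ) (θ : ℝ × X → ℝ) (c : ℝ) (x : X) : ℝ :=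
  ∫ a in Ioi 0, θ (latticeNode (η x) c a, x)

section LatticeMean

variable {X : Type*} [TopologicalSpace X] {η : X → ℝ} {θ : ℝ × X → ℝ} {c : ℝ}

theorem latticeMean_eq_ite (hθs : HasCompactSupport θ) {x : X} (hx : 0 ≤ η x) :
    latticeMean η θ c x = if η x = 0 then ∫ a in Ioi 0, θ (a, x)
      else 2 * η x * ∑' n : ℕ, θ (η x * (2 * n + c), x) := by
  obtain ⟨R, -, hR⟩ := hθs.exists_forall_lt_fst_eq_zero
  unfold latticeMean
  split_ifs with h0
  · simp [latticeNode, h0]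
  · have hpos := lt_of_le_of_ne hx (Ne.symm h0)
    exact integral_Ioi_comp_latticeNode (f := fun t => θ (t, x)) hpos
      (summable_abs_comp_lattice (fun t ht => hR t x ht) hpos c)

theorem tendsto_latticeMean [FirstCountableTopology X] (hθ : Continuous θ)
    (hθs : HasCompactSupport θ) (hη : ∀ x, 0 ≤ η x) {x₀ : X} (hηx₀ : Tendsto η (𝓝 x₀) (𝓝 0))
    (hc : 0 ≤ c) : Tendsto (latticeMean η θ c) (𝓝 x₀) (𝓝 (∫ a in Ioi 0, θ (a, x₀))) := by
  obtain ⟨R, -, hR⟩ := hθs.exists_forall_lt_fst_eq_zero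
  obtain ⟨C, hC⟩ := hθs.exists_bound_of_continuous hθ
  have hC0 : 0 ≤ C := (norm_nonneg _).trans (hC (0, x₀))
  have hη' : Tendsto η (𝓝 x₀) (𝓝[≥] 0) :=
    tendsto_nhdsWithin_iff.2 ⟨hηx₀, Eventually.of_forall hη⟩
  refine tendsto_integral_filter_of_dominated_convergence
    (F := fun x a => θ (latticeNode (η x) c a, x)) (f := fun a => θ (a, x₀))
    ((Icc 0 (R + 2)).indicator fun _ => C) (Eventually.of_forall fun x => ?_) ?_
    (integrable_indicator_Icc_const _ C).integrableOn
    (ae_restrict_of_forall_mem measurableSet_Ioi fun a ha => ?_)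
  · exact ((hθ.comp (continuous_id.prodMk continuous_const)).measurable.comp
      ((measurable_latticeNode c).comp measurable_prodMk_left)).aestronglyMeasurable
  · filter_upwards [hηx₀.eventually_lt_const one_pos] with x hx
    refine ae_restrict_of_forall_mem measurableSet_Ioi fun a ha => ?_
    calc ‖θ (latticeNode (η x) c a, x)‖
        ≤ (Icc 0 (R + 2 * η x)).indicator (fun _ => C) a :=
          (Real.norm_eq_abs _).trans_le (abs_comp_latticeNode_le_indicator
            (fun t => (Real.norm_eq_abs _).symm.trans_le (hC _)) (fun t ht => hR t x ht)
            (hη x) hc (le_of_lt ha))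
      _ ≤ (Icc 0 (R + 2)).indicator (fun _ => C) a :=
          indicator_le_indicator_of_subset (Icc_subset_Icc_right (by linarith))
            (fun _ => hC0) a
  · exact (hθ.tendsto (a, x₀)).comp
      (((tendsto_latticeNode hc (le_of_lt ha)).comp hη').prodMk_nhds tendsto_id)

theorem exists_forall_abs_latticeMean_le (hθ : Continuous θ) (hθs : HasCompactSupport θ)
    (hηc : Continuous η) (hη : ∀ x, 0 ≤ η x) (hc : 0 ≤ c) :
    ∃ B, ∀ x, |latticeMean η θ c x| ≤ B := by
  obtain ⟨R, hR0, hR⟩ := hθs.exists_forall_lt_fst_eq_zero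
  obtain ⟨C, hC⟩ := hθs.exists_bound_of_continuous hθ
  obtain ⟨M, hM⟩ := ((hθs.image continuous_snd).image hηc).bddAbove
  refine ⟨C * (R + 2 * max M 0), fun x => ?_⟩
  have hC0 : 0 ≤ C := (norm_nonneg _).trans (hC (0, x))
  by_cases hx : ∃ a, θ (a, x) ≠ 0
  · obtain ⟨a, ha⟩ := hx
    have hxM : η x ≤ M := hM ⟨x, ⟨(a, x), subset_tsupport θ ha, rfl⟩, rfl⟩
    calc |latticeMean η θ c x| ≤ C * (R + 2 * η x) :=
          abs_integral_Ioi_comp_latticeNode_le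
            (fun t => (Real.norm_eq_abs _).symm.trans_le (hC _)) (fun t ht => hR t x ht) hR0
            (hη x) hc
      _ ≤ C * (R + 2 * max M 0) := by gcongr; exact le_max_of_le_left hxM
  · simp only [not_exists, not_not] at hx
    simp only [latticeMean, hx, integral_zero, abs_zero]
    positivity

theorem measurable_latticeMean [MeasurableSpace X] [OpensMeasurableSpace X]
    [SecondCountableTopology X] (hθ : Continuous θ) (hη : Measurable η) :
    Measurable (latticeMean η θ c) :=
  (hθ.measurable.comp (((measurable_latticeNode c).comp
    ((hη.comp measurable_fst).prodMk measurable_snd)).prodMk measurable_fst)).stronglyMeasurable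
    |>.integral_prod_right' |>.measurable

end LatticeMean

theorem tendsto_integral_rescale_mul {E : Type*} [NormedAddCommGroup E] [NormedSpace ℝ E]
    [FiniteDimensional ℝ E] [MeasurableSpace E] [BorelSpace E] (μ : Measure E)
    [μ.IsAddHaarMeasure] {χ g : E → ℝ} (hχ : Integrable χ μ) (hχ1 : ∫ x, χ x ∂μ = 1)
    (hg : Measurable g) {B : ℝ} (hB : ∀ x, |g x| ≤ B) {x₀ : E} {L : ℝ}
    (hgL : Tendsto g (𝓝 x₀) (𝓝 L)) :
    Tendsto (fun ε : ℝ => ∫ x, (ε ^ Module.finrank ℝ E)⁻¹ * χ (ε⁻¹ • (x - x₀)) * g x ∂μ)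
      (𝓝[>] 0) (𝓝 L) := by
  have hrescale : ∀ ε ∈ Ioi (0 : ℝ),
      ∫ x, (ε ^ Module.finrank ℝ E)⁻¹ * χ (ε⁻¹ • (x - x₀)) * g x ∂μ =
        ∫ u, χ u * g (x₀ + ε • u) ∂μ := by
    intro ε (hε : 0 < ε)
    set G : E → ℝ := fun u => χ u * g (x₀ + ε • u)
    have hshift : ∫ x, χ (ε⁻¹ • (x - x₀)) * g x ∂μ = ∫ y, G (ε⁻¹ • y) ∂μ := by
      rw [← integral_sub_right_eq_self (fun y => G (ε⁻¹ • y)) x₀]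
      simp [G, smul_smul, mul_inv_cancel₀ (ne_of_gt hε)]
    simp_rw [mul_assoc]
    rw [integral_const_mul, hshift, Measure.integral_comp_inv_smul_of_nonneg μ G (le_of_lt hε),
      smul_eq_mul, inv_mul_cancel_left₀ (pow_ne_zero _ (ne_of_gt hε))]
  rw [tendsto_congr' (eventuallyEq_of_mem self_mem_nhdsWithin hrescale)]
  have hL : ∫ u, χ u * L ∂μ = L := by rw [integral_mul_const, hχ1, one_mul]
  rw [← hL]
  refine tendsto_integral_filter_of_dominated_convergence (fun u => |χ u| * B)
    (Eventually.of_forall fun ε => ?_) (Eventually.of_forall fun ε => ae_of_all _ fun u => ?_)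
    (hχ.abs.mul_const B) (ae_of_all _ fun u => ?_)
  · exact hχ.aestronglyMeasurable.mul
      (hg.comp (measurable_const_add x₀ |>.comp (measurable_const_smul ε))).aestronglyMeasurable
  · rw [Real.norm_eq_abs, abs_mul]
    exact mul_le_mul_of_nonneg_left (hB _) (abs_nonneg _)
  · have hpath : Tendsto (fun ε : ℝ => x₀ + ε • u) (𝓝[>] 0) (𝓝 x₀) :=
      ((by fun_prop : Continuous fun ε : ℝ => x₀ + ε • u).tendsto' 0 x₀ (by simp)).mono_left
        nhdsWithin_le_nhds
    exact tendsto_const_nhds.mul (hgL.comp hpath)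

theorem dirac_approximation_at_degenerate_frequency_general (p : ℕ)
    (η : (Fin p → ℝ) → ℝ) (hηc : Continuous η) (hηnn : ∀ lam, 0 ≤ η lam)
    (lam0 : Fin p → ℝ) (h0 : η lam0 = 0) (b : ℤ)
    (θ : ℝ × (Fin p → ℝ) → ℝ) (hθc : Continuous θ) (hθs : HasCompactSupport θ)
    (χ : (Fin p → ℝ) → ℝ) (hχi : Integrable χ)
    (hχ1 : (∫ lam : Fin p → ℝ, χ lam) = 1) :
    Tendsto (fun ε : ℝ =>
        ∫ lam : Fin p → ℝ,
          (ε ^ p)⁻¹ * χ (fun i => (lam i - lam0 i) / ε) *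
            (if η lam = 0 then ∫ a in Set.Ioi (0 : ℝ), θ (a, lam)
             else 2 * η lam * ∑' n : ℕ, θ (η lam * (2 * n + |(b : ℝ)|), lam)))
      (nhdsWithin 0 (Set.Ioi 0))
      (nhds (∫ a in Set.Ioi (0 : ℝ), θ (a, lam0))) := by
  have hc : (0 : ℝ) ≤ |(b : ℝ)| := abs_nonneg _
  have hmean : ∀ lam, (if η lam = 0 then ∫ a in Set.Ioi (0 : ℝ), θ (a, lam)
      else 2 * η lam * ∑' n : ℕ, θ (η lam * (2 * n + |(b : ℝ)|), lam)) =
        latticeMean η θ |(b : ℝ)| lam :=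
    fun lam => (latticeMean_eq_ite hθs (hηnn lam)).symm
  have hscale : ∀ (ε : ℝ) (lam : Fin p → ℝ),
      (fun i => (lam i - lam0 i) / ε) = ε⁻¹ • (lam - lam0) :=
    fun ε lam => funext fun i => by simp [div_eq_inv_mul]
  obtain ⟨B, hB⟩ := exists_forall_abs_latticeMean_le hθc hθs hηc hηnn hc
  have hlim := tendsto_integral_rescale_mul volume hχi hχ1
    (measurable_latticeMean hθc hηc.measurable) hB
    (tendsto_latticeMean hθc hθs hηnn (h0 ▸ hηc.tendsto lam0) hc)
  simp_rw [hmean, hscale]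
  rwa [Module.finrank_fin_fun] at hlim

/-- Approximate-identity lemma in the `λ` variable: integrating the measures
`dμ^λ_{j,b}`-averages of `θ` against a Dirac-approximating family concentrated at a
degenerate frequency `λ₀` recovers `∫_0^∞ θ(a, λ₀) da`. -/
theorem dirac_approximation_at_degenerate_frequency (p : ℕ) (hp : 1 ≤ p)
    (η : (Fin p → ℝ) → ℝ) (hηc : Continuous η) (hηnn : ∀ lam, 0 ≤ η lam)
    (lam0 : Fin p → ℝ) (h0 : η lam0 = 0) (b : ℤ)
    (θ : ℝ × (Fin p → ℝ) → ℝ) (hθc : Continuous θ) (hθs : HasCompactSupport θ)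
    (χ : (Fin p → ℝ) → ℝ) (hχi : Integrable χ) (hχs : HasCompactSupport χ)
    (hχ1 : (∫ lam : Fin p → ℝ, χ lam) = 1) :
    Tendsto (fun ε : ℝ =>
        ∫ lam : Fin p → ℝ,
          (ε ^ p)⁻¹ * χ (fun i => (lam i - lam0 i) / ε) *
            (if η lam = 0 then ∫ a in Set.Ioi (0 : ℝ), θ (a, lam)
             else 2 * η lam * ∑' n : ℕ, θ (η lam * (2 * n + |(b : ℝ)|), lam)))
      (nhdsWithin 0 (Set.Ioi 0))
      (nhds (∫ a in Set.Ioi (0 : ℝ), θ (a, lam0))) :=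
  dirac_approximation_at_degenerate_frequency_general p η hηc hηnn lam0 h0 b θ hθc hθs χ hχi hχ1
end
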